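/- arXiv:1708.00728 — 2 statements merged into one kernel-verified Lean document; each statement's English description precedes it below -/
import Mathlib

section
/- Suppose G is a connected undirected graph with incidence matrix B and E = [I_p;0] with p ≥ 1, h_i, f_k, g_i are continuous strictly increasing functions applied componentwise, Q is diagonal positive definite, and L is the Laplacian of a balanced strongly connected digraph. Then every solution (x̄, μ̄, ξ̄, θ̄, φ̄) of the equilibrium equations 0 = −B f(μ̄) + E g(θ̄) − d; 0 = Bᵀ(h(x̄) − ȳ) − (f(μ̄) − ξ̄); 0 = f(μ̄) − ξ̄; 0 = −Eᵀ(h(x̄) − ȳ) − (g(θ̄) − φ̄); 0 = (g(θ̄) − φ̄) − Q L (Q φ̄ + r) satisfies h(x̄) = ȳ and g(θ̄) = φ̄ = ū, where ū = Q⁻¹(λ*·1_p − r) with λ* = (1_nᵀd + 1_pᵀQ⁻¹r)/(1_pᵀQ⁻¹1_p). -/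
open Matrix BigOperators Filter Topology MeasureTheory

/-- An undirected graph on `Fin n` with `m` edges, each edge given an arbitrary
orientation: edge `k` goes from its positive end `pos k` to its negative end `neg k`. -/
structure OrientedGraph (n m : ℕ) where
  pos : Fin m → Fin n
  neg : Fin m → Fin n
  ne_ends : ∀ k, pos k ≠ neg k

namespace OrientedGraph

variable {n m : ℕ}

/-- The oriented incidence matrix `B ∈ ℝ^{n×m}`. -/
def inc (G : OrientedGraph n m) : Matrix (Fin n) (Fin m) ℝ :=
  Matrix.of fun i k => if i = G.pos k then (1 : ℝ) else if i = G.neg k then -1 else 0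

/-- Adjacency in the underlying undirected graph. -/
def Adj (G : OrientedGraph n m) (i j : Fin n) : Prop :=
  ∃ k, (G.pos k = i ∧ G.neg k = j) ∨ (G.pos k = j ∧ G.neg k = i)

/-- Connectedness of the underlying undirected graph. -/
def Connected (G : OrientedGraph n m) : Prop :=
  ∀ i j : Fin n, Relation.ReflTransGen G.Adj i j

end OrientedGraph

/-- The matrix `E = [I_p ; 0_{(n-p)×p}]` selecting the first `p` nodes. -/
def selE (n p : ℕ) : Matrix (Fin n) (Fin p) ℝ :=
  Matrix.of fun i j => if (i : ℕ) = (j : ℕ) then 1 else 0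

/-- Componentwise application of a family of scalar functions. -/
def cw {k : ℕ} (f : Fin k → ℝ → ℝ) (x : Fin k → ℝ) : Fin k → ℝ :=
  fun i => f i (x i)

/-- `λ* = (1ₙᵀ d + 1ₚᵀ Q⁻¹ r)/(1ₚᵀ Q⁻¹ 1ₚ)` for `Q = diag q`. -/
noncomputable def lamStar {n p : ℕ} (q r : Fin p → ℝ) (d : Fin n → ℝ) : ℝ :=
  ((∑ i, d i) + ∑ i, r i / q i) / (∑ i, (q i)⁻¹)

/-- The optimal input `ū = Q⁻¹(λ*·1ₚ − r)`. -/
noncomputable def uOpt {n p : ℕ} (q r : Fin p → ℝ) (d : Fin n → ℝ) : Fin p → ℝ :=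
  fun i => (lamStar q r d - r i) / q i

/-- The cost `C(u) = ½ uᵀQu + rᵀu + s` for `Q = diag q`. -/
noncomputable def cost {p : ℕ} (q r : Fin p → ℝ) (s : ℝ) (u : Fin p → ℝ) : ℝ :=
  (1 / 2) * (∑ i, q i * u i ^ 2) + (∑ i, r i * u i) + s

/-- `L` is the Laplacian matrix of a balanced, strongly connected weighted digraph:
nonpositive off-diagonal entries, zero row sums, zero column sums, and the digraph
whose arcs are the pairs with `L i j < 0` is strongly connected. -/
structure IsBalancedStronglyConnectedLaplacian {p : ℕ} (L : Matrix (Fin p) (Fin p) ℝ) : Prop where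
  offdiag_nonpos : ∀ i j, i ≠ j → L i j ≤ 0
  rowsum : L.mulVec (fun _ => 1) = 0
  colsum : Matrix.vecMul (fun _ => 1) L = 0
  sconn : ∀ i j : Fin p, Relation.ReflTransGen (fun a b => a ≠ b ∧ L a b < 0) i j

/-!
Since `f(μ̄) = ξ̄`, the second equation says `Bᵀ(h(x̄) − ȳ) = 0`, so on the connected graph
`h(x̄) − ȳ = c·1`, and the fourth gives `g(θ̄) − φ̄ = −c·1`. With `w = Qφ̄ + r` the fifth reads
`Q L w = −c·1`; pairing with `Q⁻¹1` and using `1ᵀL = 0` forces `c = 0`. Hence `L w = 0`, and the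
maximum principle on the strongly connected digraph makes `w = λ·1`, i.e. `φ̄ = Q⁻¹(λ1 − r)`.
Finally, summing the first equation and using `1ᵀB = 0`, `1ᵀE = 1ᵀ` leaves `1ᵀφ̄ = 1ᵀd`,
which pins down `λ = λ*`.
-/

theorem Matrix.sum_mulVec_eq_zero_of_one_vecMul_eq_zero {ι κ : Type*} [Fintype ι] [Fintype κ]
    {A : Matrix ι κ ℝ} (hA : 1 ᵥ* A = 0) (x : κ → ℝ) : ∑ i, (A *ᵥ x) i = 0 := by
  rw [← one_dotProduct, dotProduct_mulVec, hA, zero_dotProduct]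

namespace OrientedGraph

variable {n m : ℕ} (G : OrientedGraph n m)

theorem inc_apply (i : Fin n) (k : Fin m) :
    G.inc i k = (if i = G.pos k then 1 else 0) - (if i = G.neg k then 1 else 0) := by
  rcases eq_or_ne i (G.pos k) with rfl | h1
  · simp [inc, G.ne_ends k]
  · simp only [inc, of_apply, h1, if_false]
    split_ifs <;> simp

theorem one_vecMul_inc : 1 ᵥ* G.inc = 0 := by
  ext k
  simp [vecMul, dotProduct, inc_apply]

theorem sum_inc_mulVec (x : Fin m → ℝ) : ∑ i, (G.inc *ᵥ x) i = 0 :=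
  sum_mulVec_eq_zero_of_one_vecMul_eq_zero G.one_vecMul_inc x

theorem transpose_inc_mulVec_apply (v : Fin n → ℝ) (k : Fin m) :
    (G.incᵀ *ᵥ v) k = v (G.pos k) - v (G.neg k) := by
  simp [mulVec, dotProduct, inc_apply, sub_mul, Finset.sum_sub_distrib]

theorem Connected.eq_of_transpose_inc_mulVec_eq_zero {G : OrientedGraph n m} (hG : G.Connected)
    {v : Fin n → ℝ} (hv : G.incᵀ *ᵥ v = 0) (i j : Fin n) : v i = v j := by
  have hedge : ∀ k, v (G.pos k) = v (G.neg k) := fun k =>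
    sub_eq_zero.mp ((G.transpose_inc_mulVec_apply v k).symm.trans (congrFun hv k))
  have hadj : ∀ a b, G.Adj a b → v a = v b := by
    rintro a b ⟨k, ⟨rfl, rfl⟩ | ⟨rfl, rfl⟩⟩
    exacts [hedge k, (hedge k).symm]
  induction hG i j with
  | refl => rfl
  | tail _ hab ih => exact ih.trans (hadj _ _ hab)

end OrientedGraph

section selE

variable {n p : ℕ}

theorem selE_apply (hpn : p ≤ n) (i : Fin n) (j : Fin p) :
    selE n p i j = if i = Fin.castLE hpn j then 1 else 0 := by
  simp [selE, Fin.ext_iff]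

theorem one_vecMul_selE (hpn : p ≤ n) : 1 ᵥ* selE n p = 1 := by
  ext j
  simp [vecMul, dotProduct, selE_apply hpn]

theorem sum_selE_mulVec (hpn : p ≤ n) (u : Fin p → ℝ) :
    ∑ i, (selE n p *ᵥ u) i = ∑ j, u j := by
  rw [← one_dotProduct, dotProduct_mulVec, one_vecMul_selE hpn, one_dotProduct]

theorem selE_transpose_mulVec_apply (hpn : p ≤ n) (v : Fin n → ℝ) (j : Fin p) :
    ((selE n p)ᵀ *ᵥ v) j = v (Fin.castLE hpn j) := by
  simp [mulVec, dotProduct, selE_apply hpn]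

end selE

namespace IsBalancedStronglyConnectedLaplacian

variable {p : ℕ} {L : Matrix (Fin p) (Fin p) ℝ}

theorem apply_eq_of_forall_apply_le (hL : IsBalancedStronglyConnectedLaplacian L)
    {w : Fin p → ℝ} (hw : L *ᵥ w = 0) {b c : Fin p} (hmax : ∀ k, w k ≤ w b) (hbc : L b c < 0) :
    w c = w b := by
  have hsum : ∑ k, L b k * (w k - w b) = 0 := by
    have hrow : ∑ k, L b k = 0 := by simpa [mulVec, dotProduct] using congrFun hL.rowsum b
    have hwb : ∑ k, L b k * w k = 0 := by simpa [mulVec, dotProduct] using congrFun hw b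
    simp only [mul_sub, Finset.sum_sub_distrib, ← Finset.sum_mul, hrow, hwb, zero_mul, sub_zero]
  have hnonneg : ∀ k ∈ Finset.univ, 0 ≤ L b k * (w k - w b) := by
    intro k _
    rcases eq_or_ne b k with rfl | hk
    · simp
    · exact mul_nonneg_of_nonpos_of_nonpos (hL.offdiag_nonpos b k hk) (sub_nonpos.mpr (hmax k))
  have hc := (Finset.sum_eq_zero_iff_of_nonneg hnonneg).mp hsum c (Finset.mem_univ c)
  linarith [(mul_eq_zero.mp hc).resolve_left hbc.ne]

theorem eq_of_mulVec_eq_zero (hL : IsBalancedStronglyConnectedLaplacian L) {w : Fin p → ℝ}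
    (hw : L *ᵥ w = 0) (i j : Fin p) : w i = w j := by
  have : Nonempty (Fin p) := ⟨i⟩
  obtain ⟨b, hb⟩ := Finite.exists_max w
  have hreach : ∀ k, w k = w b := by
    intro k
    induction hL.sconn b k with
    | refl => rfl
    | tail _ hac ih => exact (hL.apply_eq_of_forall_apply_le hw (ih ▸ hb) hac.2).trans ih
  rw [hreach i, hreach j]

end IsBalancedStronglyConnectedLaplacian

theorem eq_zero_of_forall_mul_mulVec_eq {ι : Type*} [Fintype ι] [Nonempty ι]
    {L : Matrix ι ι ℝ} (hL : 1 ᵥ* L = 0) {q : ι → ℝ} (hq : ∀ i, 0 < q i) {w : ι → ℝ} {c : ℝ}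
    (h : ∀ i, q i * (L *ᵥ w) i = c) : c = 0 := by
  have hLw : ∀ i, (L *ᵥ w) i = (q i)⁻¹ * c := fun i => by
    rw [← h i, inv_mul_cancel_left₀ (hq i).ne']
  have hpos : 0 < ∑ i, (q i)⁻¹ := Finset.sum_pos (fun i _ => inv_pos.mpr (hq i)) Finset.univ_nonempty
  have := sum_mulVec_eq_zero_of_one_vecMul_eq_zero hL w
  simp only [hLw, ← Finset.sum_mul, mul_eq_zero] at this
  exact this.resolve_left hpos.ne'

theorem eq_uOpt_of_forall_mul_add_eq {n p : ℕ} {q r φ : Fin p → ℝ} {d : Fin n → ℝ} {M : ℝ}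
    (hq : ∀ i, 0 < q i) (hφ : ∀ i, q i * φ i + r i = M) (hsum : ∑ i, φ i = ∑ i, d i) :
    φ = uOpt q r d := by
  ext i
  have hφ' : ∀ i, φ i = (M - r i) / q i := fun i => by
    rw [eq_div_iff (hq i).ne']
    linarith [hφ i]
  have hpos : 0 < ∑ i, (q i)⁻¹ :=
    Finset.sum_pos (fun i _ => inv_pos.mpr (hq i)) ⟨i, Finset.mem_univ _⟩
  have hM : M = lamStar q r d := by
    rw [lamStar, eq_div_iff hpos.ne', ← hsum]
    simp only [hφ', div_eq_mul_inv, sub_mul, Finset.sum_sub_distrib, Finset.mul_sum]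
    ring
  rw [hφ' i, hM, uOpt]

theorem equilibrium_is_optimal_general {n m p : ℕ} (hp : 0 < p) (hpn : p ≤ n)
    (G : OrientedGraph n m) (hG : G.Connected)
    (h : Fin n → ℝ → ℝ)
    (f : Fin m → ℝ → ℝ)
    (g : Fin p → ℝ → ℝ)
    (q r : Fin p → ℝ) (hq : ∀ i, 0 < q i) (d ybar : Fin n → ℝ)
    (L : Matrix (Fin p) (Fin p) ℝ) (hL : IsBalancedStronglyConnectedLaplacian L)
    (xb : Fin n → ℝ) (mb xib : Fin m → ℝ) (thb phb : Fin p → ℝ)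
    (heq1 : 0 = -(G.inc.mulVec (cw f mb)) + (selE n p).mulVec (cw g thb) - d)
    (heq2 : 0 = (G.inc)ᵀ.mulVec (cw h xb - ybar) - (cw f mb - xib))
    (heq3 : 0 = cw f mb - xib)
    (heq4 : 0 = -((selE n p)ᵀ.mulVec (cw h xb - ybar)) - (cw g thb - phb))
    (heq5 : 0 = (cw g thb - phb) -
      (Matrix.diagonal q).mulVec (L.mulVec ((Matrix.diagonal q).mulVec phb + r))) :
    cw h xb = ybar ∧ cw g thb = phb ∧ cw g thb = uOpt q r d := by
  set v := cw h xb - ybar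
  set w := diagonal q *ᵥ phb + r
  obtain ⟨c, hc⟩ : ∃ c, ∀ i, v i = c :=
    ⟨_, fun i => hG.eq_of_transpose_inc_mulVec_eq_zero (by simpa [← heq3] using heq2.symm) i
      ⟨0, hp.trans_le hpn⟩⟩
  have hgφ : ∀ j, cw g thb j - phb j = -c := fun j => by
    have := congrFun heq4 j
    simp only [Pi.zero_apply, Pi.sub_apply, Pi.neg_apply, selE_transpose_mulVec_apply hpn,
      hc] at this
    linarith
  have hLw : ∀ i, q i * (L *ᵥ w) i = -c := fun i => by
    have := congrFun heq5 i
    simp only [Pi.zero_apply, Pi.sub_apply, mulVec_diagonal] at this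
    linarith [hgφ i]
  have : Nonempty (Fin p) := Fin.pos_iff_nonempty.mp hp
  have hc0 : c = 0 := neg_eq_zero.mp (eq_zero_of_forall_mul_mulVec_eq hL.colsum hq hLw)
  have hgφ0 : cw g thb = phb := funext fun j => sub_eq_zero.mp (by rw [hgφ j, hc0, neg_zero])
  have hLw0 : L *ᵥ w = 0 := funext fun i =>
    (mul_eq_zero.mp (by rw [hLw i, hc0, neg_zero])).resolve_left (hq i).ne'
  have hw : ∀ i, q i * phb i + r i = w ⟨0, hp⟩ := fun i => by
    rw [← hL.eq_of_mulVec_eq_zero hLw0 i]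
    simp [w, mulVec_diagonal]
  have hsum : ∑ i, phb i = ∑ i, d i := by
    have := congrArg (fun x => ∑ i, x i) heq1
    simp only [Pi.zero_apply, Finset.sum_const_zero, Pi.sub_apply, Pi.add_apply, Pi.neg_apply,
      Finset.sum_sub_distrib, Finset.sum_add_distrib, Finset.sum_neg_distrib, G.sum_inc_mulVec,
      sum_selE_mulVec hpn, hgφ0] at this
    linarith
  exact ⟨funext fun i => sub_eq_zero.mp ((hc i).trans hc0), hgφ0,
    hgφ0 ▸ eq_uOpt_of_forall_mul_add_eq hq hw hsum⟩

/-- Every equilibrium of the closed-loop system achieves output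
regulation `h(x̄) = ȳ` and the optimal input `g(θ̄) = φ̄ = ū`. -/
theorem equilibrium_is_optimal {n m p : ℕ} (hp : 0 < p) (hpn : p ≤ n)
    (G : OrientedGraph n m) (hG : G.Connected)
    (h : Fin n → ℝ → ℝ) (hh : ∀ i, Continuous (h i) ∧ StrictMono (h i))
    (f : Fin m → ℝ → ℝ) (hf : ∀ k, Continuous (f k) ∧ StrictMono (f k))
    (g : Fin p → ℝ → ℝ) (hg : ∀ i, Continuous (g i) ∧ StrictMono (g i))
    (q r : Fin p → ℝ) (hq : ∀ i, 0 < q i) (d ybar : Fin n → ℝ)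
    (L : Matrix (Fin p) (Fin p) ℝ) (hL : IsBalancedStronglyConnectedLaplacian L)
    (xb : Fin n → ℝ) (mb xib : Fin m → ℝ) (thb phb : Fin p → ℝ)
    (heq1 : 0 = -(G.inc.mulVec (cw f mb)) + (selE n p).mulVec (cw g thb) - d)
    (heq2 : 0 = (G.inc)ᵀ.mulVec (cw h xb - ybar) - (cw f mb - xib))
    (heq3 : 0 = cw f mb - xib)
    (heq4 : 0 = -((selE n p)ᵀ.mulVec (cw h xb - ybar)) - (cw g thb - phb))
    (heq5 : 0 = (cw g thb - phb) -
      (Matrix.diagonal q).mulVec (L.mulVec ((Matrix.diagonal q).mulVec phb + r))) :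
    cw h xb = ybar ∧ cw g thb = phb ∧ cw g thb = uOpt q r d :=
  equilibrium_is_optimal_general hp hpn G hG h f g q r hq d ybar L hL xb mb xib thb phb heq1 heq2
    heq3 heq4 heq5
end

section
/- Let (x̄, μ̄, ξ̄, θ̄, φ̄) satisfy the equilibrium equations 0 = −B f(μ̄) + E g(θ̄) − d; 0 = Bᵀ(h(x̄) − ȳ) − (f(μ̄) − ξ̄); 0 = f(μ̄) − ξ̄; 0 = −Eᵀ(h(x̄) − ȳ) − (g(θ̄) − φ̄); 0 = (g(θ̄) − φ̄) − Q L (Q φ̄ + r), and additionally h(x̄) = ȳ and g(θ̄) = φ̄. Then along any differentiable solution t ↦ (x, μ, ξ, θ, φ) of the closed-loop system T_x ẋ = −B f(μ) + E g(θ) − d; T_μ μ̇ = Bᵀ(h(x) − ȳ) − (f(μ) − ξ); T_ξ ξ̇ = f(μ) − ξ; T_θ θ̇ = −Eᵀ(h(x) − ȳ) − (g(θ) − φ); T_φ φ̇ = g(θ) − φ − Q L (Q φ + r), the function V = V₁ + V₂ (sum of the two incremental storage functions) satisfies dV/dt = −(φ − φ̄)ᵀ Q L Q (φ − φ̄) −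 ‖g(θ) − φ‖² − ‖f(μ) − ξ‖² ≤ 0. -/
open Matrix BigOperators Filter Topology MeasureTheory

/-! The derivative of `V` is computed term by term; substituting the closed-loop dynamics, the
coupling through `B` and `E` cancels because it enters skew-symmetrically, and the shifted
equilibrium absorbs `d` and `r`. What remains is `-(φ - φ̄)ᵀ QLQ (φ - φ̄)` minus two squares,
and a balanced Laplacian has a nonnegative quadratic form: `2 yᵀLy = -∑ᵢⱼ Lᵢⱼ (yᵢ - yⱼ)²`. -/

theorem hasDerivAt_sum_mul_integral_sub {ι : Type*} [Fintype ι] {h : ι → ℝ → ℝ}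
    (hh : ∀ i, Continuous (h i)) (T a : ι → ℝ) {u : ℝ → ι → ℝ} {u' : ι → ℝ} {t : ℝ}
    (hu : ∀ i, HasDerivAt (fun s => u s i) (u' i) t) :
    HasDerivAt (fun s => ∑ i, T i * ∫ y in a i..u s i, (h i y - h i (a i)))
      ((fun i => h i (u t i) - h i (a i)) ⬝ᵥ fun i => T i * u' i) t := by
  have hint (i : ι) : HasDerivAt (fun s => ∫ y in a i..u s i, (h i y - h i (a i)))
      ((h i (u t i) - h i (a i)) * u' i) t := by
    have hc : Continuous fun y => h i y - h i (a i) := (hh i).sub continuous_const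
    exact (hc.integral_hasStrictDerivAt (a i) (u t i)).hasDerivAt.comp t (hu i)
  refine (HasDerivAt.fun_sum fun i _ => (hint i).const_mul (T i)).congr_deriv ?_
  exact Finset.sum_congr rfl fun i _ => by ring

theorem hasDerivAt_half_sum_mul_sq_sub {ι : Type*} [Fintype ι] (T a : ι → ℝ)
    {u : ℝ → ι → ℝ} {u' : ι → ℝ} {t : ℝ} (hu : ∀ i, HasDerivAt (fun s => u s i) (u' i) t) :
    HasDerivAt (fun s => 1 / 2 * ∑ i, T i * (u s i - a i) ^ 2)
      ((u t - a) ⬝ᵥ fun i => T i * u' i) t := by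
  have hsq (i : ι) := ((hu i).sub_const (a i)).fun_pow 2
  refine ((HasDerivAt.fun_sum fun i _ => (hsq i).const_mul (T i)).const_mul
    (1 / 2 : ℝ)).congr_deriv ?_
  rw [Finset.mul_sum]
  exact Finset.sum_congr rfl fun i _ => by simp only [Pi.sub_apply]; ring

theorem dotProduct_mulVec_self_nonneg_of_balanced {ι : Type*} [Fintype ι] {L : Matrix ι ι ℝ}
    (hoff : ∀ i j, i ≠ j → L i j ≤ 0) (hrow : L *ᵥ 1 = 0) (hcol : 1 ᵥ* L = 0) (y : ι → ℝ) :
    0 ≤ y ⬝ᵥ L *ᵥ y := by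
  have hrow' : ∑ i, ∑ j, y i ^ 2 * L i j = 0 := by
    have (i : ι) : ∑ j, L i j = 0 := by simpa [mulVec, dotProduct] using congrFun hrow i
    simp [← Finset.mul_sum, this]
  have hcol' : ∑ i, ∑ j, y j ^ 2 * L i j = 0 := by
    have (j : ι) : ∑ i, L i j = 0 := by simpa [vecMul, dotProduct] using congrFun hcol j
    rw [Finset.sum_comm]
    simp [← Finset.mul_sum, this]
  have hexpand : ∑ i, ∑ j, L i j * (y i - y j) ^ 2 =
      ∑ i, ∑ j, y i ^ 2 * L i j + ∑ i, ∑ j, y j ^ 2 * L i j - 2 * (y ⬝ᵥ L *ᵥ y) := by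
    simp only [dotProduct, mulVec, Finset.mul_sum, ← Finset.sum_add_distrib,
      ← Finset.sum_sub_distrib]
    exact Finset.sum_congr rfl fun i _ => Finset.sum_congr rfl fun j _ => by ring
  have hnonpos : ∑ i, ∑ j, L i j * (y i - y j) ^ 2 ≤ 0 := by
    refine Finset.sum_nonpos fun i _ => Finset.sum_nonpos fun j _ => ?_
    rcases eq_or_ne i j with rfl | hij
    · simp
    · exact mul_nonpos_of_nonpos_of_nonneg (hoff i j hij) (sq_nonneg _)
  linarith

theorem dotProduct_transpose_mul_mul_mulVec {ι κ : Type*} [Fintype ι] [Fintype κ]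
    (A : Matrix κ ι ℝ) (L : Matrix κ κ ℝ) (y : ι → ℝ) :
    y ⬝ᵥ (Aᵀ * L * A) *ᵥ y = A *ᵥ y ⬝ᵥ L *ᵥ (A *ᵥ y) := by
  rw [← mulVec_mulVec, ← mulVec_mulVec, dotProduct_transpose_mulVec, dotProduct_comm]

/-- `a, u, v, w, z` stand for `h(x) - ȳ, f(μ), ξ, g(θ), φ`, and `(ub, wb)` for `(ξ̄, φ̄)`: the
left side is `dV/dt` once the dynamics are substituted. -/
theorem storageRate_eq_neg_dissipation {ι κ ν : Type*} [Fintype ι] [Fintype κ] [Fintype ν]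
    (B : Matrix ι κ ℝ) (E : Matrix ι ν ℝ) (Q L : Matrix ν ν ℝ) (a : ι → ℝ)
    (u v ub : κ → ℝ) (w z wb r : ν → ℝ) (d : ι → ℝ)
    (hd : d = -(B *ᵥ ub) + E *ᵥ wb) (hQ : Q *ᵥ (L *ᵥ (Q *ᵥ wb + r)) = 0) :
    a ⬝ᵥ (-(B *ᵥ u) + E *ᵥ w - d)
      + (u - ub) ⬝ᵥ (Bᵀ *ᵥ a - (u - v))
      + (v - ub) ⬝ᵥ (u - v)
      + (w - wb) ⬝ᵥ (-(Eᵀ *ᵥ a) - (w - z))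
      + (z - wb) ⬝ᵥ (w - z - Q *ᵥ (L *ᵥ (Q *ᵥ z + r)))
    = -((z - wb) ⬝ᵥ (Q * L * Q) *ᵥ (z - wb)) - (w - z) ⬝ᵥ (w - z) - (u - v) ⬝ᵥ (u - v) := by
  have hsrc : -(B *ᵥ u) + E *ᵥ w - d = -(B *ᵥ (u - ub)) + E *ᵥ (w - wb) := by
    rw [hd, mulVec_sub, mulVec_sub]; abel
  have hctl : Q *ᵥ (L *ᵥ (Q *ᵥ z + r)) = (Q * L * Q) *ᵥ (z - wb) := by
    rw [← sub_zero (Q *ᵥ _), ← hQ, ← mulVec_sub, ← mulVec_sub, add_sub_add_right_eq_sub,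
      ← mulVec_sub, mulVec_mulVec, mulVec_mulVec]
  have hu : u - v = (u - ub) - (v - ub) := by abel
  have hw : w - z = (w - wb) - (z - wb) := by abel
  rw [hsrc, hctl, hu, hw]
  generalize u - ub = U, v - ub = V, w - wb = W, z - wb = Z
  simp only [dotProduct_add, dotProduct_sub, dotProduct_neg, sub_dotProduct]
  rw [dotProduct_transpose_mulVec, dotProduct_transpose_mulVec, dotProduct_comm V U,
    dotProduct_comm Z W]
  ring

theorem storage_V_derivative_nonpos_general {n m p : ℕ} (G : OrientedGraph n m)
    (h : Fin n → ℝ → ℝ) (hh : ∀ i, ContDiff ℝ 1 (h i) ∧ StrictMono (h i))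
    (f : Fin m → ℝ → ℝ) (hf : ∀ k, ContDiff ℝ 1 (f k) ∧ StrictMono (f k))
    (g : Fin p → ℝ → ℝ) (hg : ∀ i, ContDiff ℝ 1 (g i) ∧ StrictMono (g i))
    (Tx : Fin n → ℝ) (Tm Txi : Fin m → ℝ) (Tth Tph : Fin p → ℝ)
    (q r : Fin p → ℝ) (d ybar : Fin n → ℝ)
    (L : Matrix (Fin p) (Fin p) ℝ) (hL : IsBalancedStronglyConnectedLaplacian L)
    -- the equilibrium
    (xb : Fin n → ℝ) (mb xib : Fin m → ℝ) (thb phb : Fin p → ℝ)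
    (heq1 : 0 = -(G.inc.mulVec (cw f mb)) + (selE n p).mulVec (cw g thb) - d)
    (heq3 : 0 = cw f mb - xib)
    (heq5 : 0 = (cw g thb - phb) -
      (Matrix.diagonal q).mulVec (L.mulVec ((Matrix.diagonal q).mulVec phb + r)))
    (heqx : cw h xb = ybar) (heqg : cw g thb = phb)
    -- the solution of the closed-loop system
    (x x' : ℝ → Fin n → ℝ) (μ ξ μ' ξ' : ℝ → Fin m → ℝ) (θ φ θ' φ' : ℝ → Fin p → ℝ)
    (hx : ∀ t i, HasDerivAt (fun s => x s i) (x' t i) t)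
    (hμ : ∀ t k, HasDerivAt (fun s => μ s k) (μ' t k) t)
    (hξ : ∀ t k, HasDerivAt (fun s => ξ s k) (ξ' t k) t)
    (hθ : ∀ t i, HasDerivAt (fun s => θ s i) (θ' t i) t)
    (hφ : ∀ t i, HasDerivAt (fun s => φ s i) (φ' t i) t)
    (hxeq : ∀ t, (fun i => Tx i * x' t i) =
      -(G.inc.mulVec (cw f (μ t))) + (selE n p).mulVec (cw g (θ t)) - d)
    (hμeq : ∀ t, (fun k => Tm k * μ' t k) =
      (G.inc)ᵀ.mulVec (cw h (x t) - ybar) - (cw f (μ t) - ξ t))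
    (hξeq : ∀ t, (fun k => Txi k * ξ' t k) = cw f (μ t) - ξ t)
    (hθeq : ∀ t, (fun i => Tth i * θ' t i) =
      -((selE n p)ᵀ.mulVec (cw h (x t) - ybar)) - (cw g (θ t) - φ t))
    (hφeq : ∀ t, (fun i => Tph i * φ' t i) =
      cw g (θ t) - φ t -
        (Matrix.diagonal q).mulVec (L.mulVec ((Matrix.diagonal q).mulVec (φ t) + r))) :
    ∀ t : ℝ,
      HasDerivAt (fun s =>
          (∑ i, Tx i * ∫ y in (xb i)..(x s i), (h i y - h i (xb i))) +
          (∑ k, Tm k * ∫ y in (mb k)..(μ s k), (f k y - f k (mb k))) +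
          (1 / 2) * (∑ k, Txi k * (ξ s k - xib k) ^ 2) +
          (∑ i, Tth i * ∫ y in (thb i)..(θ s i), (g i y - g i (thb i))) +
          (1 / 2) * (∑ i, Tph i * (φ s i - phb i) ^ 2))
        (-((φ t - phb) ⬝ᵥ (Matrix.diagonal q * L * Matrix.diagonal q).mulVec (φ t - phb)) -
          (∑ i, (g i (θ t i) - φ t i) ^ 2) - (∑ k, (f k (μ t k) - ξ t k) ^ 2)) t ∧
      (-((φ t - phb) ⬝ᵥ (Matrix.diagonal q * L * Matrix.diagonal q).mulVec (φ t - phb)) -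
          (∑ i, (g i (θ t i) - φ t i) ^ 2) - (∑ k, (f k (μ t k) - ξ t k) ^ 2)) ≤ 0 := by
  intro t
  obtain rfl : cw f mb = xib := sub_eq_zero.mp heq3.symm
  subst heqx heqg
  have hd : d = -(G.inc *ᵥ cw f mb) + selE n p *ᵥ cw g thb :=
    (sub_eq_zero.mp heq1.symm).symm
  have hQ : diagonal q *ᵥ (L *ᵥ (diagonal q *ᵥ cw g thb + r)) = 0 := by
    rwa [sub_self, zero_sub, eq_comm, neg_eq_zero] at heq5
  have hV := ((((hasDerivAt_sum_mul_integral_sub (fun i => (hh i).1.continuous) Tx xb (hx t)).add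
    (hasDerivAt_sum_mul_integral_sub (fun k => (hf k).1.continuous) Tm mb (hμ t))).add
    (hasDerivAt_half_sum_mul_sq_sub Txi (cw f mb) (hξ t))).add
    (hasDerivAt_sum_mul_integral_sub (fun i => (hg i).1.continuous) Tth thb (hθ t))).add
    (hasDerivAt_half_sum_mul_sq_sub Tph (cw g thb) (hφ t))
  rw [hxeq t, hμeq t, hξeq t, hθeq t, hφeq t] at hV
  have hdot_self {k : ℕ} (v : Fin k → ℝ) : v ⬝ᵥ v = ∑ i, v i ^ 2 := by simp only [dotProduct, sq]
  refine ⟨hV.congr_deriv ?_, ?_⟩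
  · rw [← hdot_self, ← hdot_self]
    exact storageRate_eq_neg_dissipation G.inc (selE n p) (diagonal q) L _ _ (ξ t) (cw f mb)
      _ (φ t) (cw g thb) r d hd hQ
  · have hQLQ := dotProduct_mulVec_self_nonneg_of_balanced hL.offdiag_nonpos hL.rowsum
      hL.colsum (diagonal q *ᵥ (φ t - cw g thb))
    rw [← dotProduct_transpose_mul_mul_mulVec, diagonal_transpose] at hQLQ
    have hg2 : 0 ≤ ∑ i, (g i (θ t i) - φ t i) ^ 2 := by positivity
    have hf2 : 0 ≤ ∑ k, (f k (μ t k) - ξ t k) ^ 2 := by positivity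
    linarith

/-- Along solutions of the closed-loop system, the total storage
function `V = V₁ + V₂` satisfies
`dV/dt = −(φ−φ̄)ᵀQLQ(φ−φ̄) − ‖g(θ)−φ‖² − ‖f(μ)−ξ‖² ≤ 0`. -/
theorem storage_V_derivative_nonpos {n m p : ℕ} (hpn : p ≤ n) (G : OrientedGraph n m)
    (h : Fin n → ℝ → ℝ) (hh : ∀ i, ContDiff ℝ 1 (h i) ∧ StrictMono (h i))
    (f : Fin m → ℝ → ℝ) (hf : ∀ k, ContDiff ℝ 1 (f k) ∧ StrictMono (f k))
    (g : Fin p → ℝ → ℝ) (hg : ∀ i, ContDiff ℝ 1 (g i) ∧ StrictMono (g i))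
    (Tx : Fin n → ℝ) (hTx : ∀ i, 0 < Tx i)
    (Tm Txi : Fin m → ℝ) (hTm : ∀ k, 0 < Tm k) (hTxi : ∀ k, 0 < Txi k)
    (Tth Tph : Fin p → ℝ) (hTth : ∀ i, 0 < Tth i) (hTph : ∀ i, 0 < Tph i)
    (q r : Fin p → ℝ) (hq : ∀ i, 0 < q i) (d ybar : Fin n → ℝ)
    (L : Matrix (Fin p) (Fin p) ℝ) (hL : IsBalancedStronglyConnectedLaplacian L)
    -- the equilibrium
    (xb : Fin n → ℝ) (mb xib : Fin m → ℝ) (thb phb : Fin p → ℝ)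
    (heq1 : 0 = -(G.inc.mulVec (cw f mb)) + (selE n p).mulVec (cw g thb) - d)
    (heq2 : 0 = (G.inc)ᵀ.mulVec (cw h xb - ybar) - (cw f mb - xib))
    (heq3 : 0 = cw f mb - xib)
    (heq4 : 0 = -((selE n p)ᵀ.mulVec (cw h xb - ybar)) - (cw g thb - phb))
    (heq5 : 0 = (cw g thb - phb) -
      (Matrix.diagonal q).mulVec (L.mulVec ((Matrix.diagonal q).mulVec phb + r)))
    (heqx : cw h xb = ybar) (heqg : cw g thb = phb)
    -- the solution of the closed-loop system
    (x x' : ℝ → Fin n → ℝ) (μ ξ μ' ξ' : ℝ → Fin m → ℝ) (θ φ θ' φ' : ℝ → Fin p → ℝ)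
    (hx : ∀ t i, HasDerivAt (fun s => x s i) (x' t i) t)
    (hμ : ∀ t k, HasDerivAt (fun s => μ s k) (μ' t k) t)
    (hξ : ∀ t k, HasDerivAt (fun s => ξ s k) (ξ' t k) t)
    (hθ : ∀ t i, HasDerivAt (fun s => θ s i) (θ' t i) t)
    (hφ : ∀ t i, HasDerivAt (fun s => φ s i) (φ' t i) t)
    (hxeq : ∀ t, (fun i => Tx i * x' t i) =
      -(G.inc.mulVec (cw f (μ t))) + (selE n p).mulVec (cw g (θ t)) - d)
    (hμeq : ∀ t, (fun k => Tm k * μ' t k) =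
      (G.inc)ᵀ.mulVec (cw h (x t) - ybar) - (cw f (μ t) - ξ t))
    (hξeq : ∀ t, (fun k => Txi k * ξ' t k) = cw f (μ t) - ξ t)
    (hθeq : ∀ t, (fun i => Tth i * θ' t i) =
      -((selE n p)ᵀ.mulVec (cw h (x t) - ybar)) - (cw g (θ t) - φ t))
    (hφeq : ∀ t, (fun i => Tph i * φ' t i) =
      cw g (θ t) - φ t -
        (Matrix.diagonal q).mulVec (L.mulVec ((Matrix.diagonal q).mulVec (φ t) + r))) :
    ∀ t : ℝ,
      HasDerivAt (fun s =>
          (∑ i, Tx i * ∫ y in (xb i)..(x s i), (h i y - h i (xb i))) +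
          (∑ k, Tm k * ∫ y in (mb k)..(μ s k), (f k y - f k (mb k))) +
          (1 / 2) * (∑ k, Txi k * (ξ s k - xib k) ^ 2) +
          (∑ i, Tth i * ∫ y in (thb i)..(θ s i), (g i y - g i (thb i))) +
          (1 / 2) * (∑ i, Tph i * (φ s i - phb i) ^ 2))
        (-((φ t - phb) ⬝ᵥ (Matrix.diagonal q * L * Matrix.diagonal q).mulVec (φ t - phb)) -
          (∑ i, (g i (θ t i) - φ t i) ^ 2) - (∑ k, (f k (μ t k) - ξ t k) ^ 2)) t ∧
      (-((φ t - phb) ⬝ᵥ (Matrix.diagonal q * L * Matrix.diagonal q).mulVec (φ t - phb)) -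
          (∑ i, (g i (θ t i) - φ t i) ^ 2) - (∑ k, (f k (μ t k) - ξ t k) ^ 2)) ≤ 0 :=
  storage_V_derivative_nonpos_general G h hh f hf g hg Tx Tm Txi Tth Tph q r d ybar L hL xb mb xib
    thb phb heq1 heq3 heq5 heqx heqg x x' μ ξ μ' ξ' θ φ θ' φ' hx hμ hξ hθ hφ hxeq hμeq hξeq hθeq
    hφeq
end
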